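/- arXiv:2502.19825 — 5 statements merged into one kernel-verified Lean document; each statement's English description precedes it below -/
import Mathlib

section
/- Let n, p be positive integers with p ≥ 2, let A be a real n×p matrix none of whose columns is zero, with columns a_{·1},…,a_{·p}, let ρ := max_{i≠j} |a_{·i}ᵀ a_{·j}| / ‖a_{·j}‖₂², and let μ ∈ ℝ. Then the following are equivalent: (i) for every j ∈ {1,…,p}, the vector w_j := (n(1−μ)/‖a_{·j}‖₂²) · a_{·j} is an optimal solution of the problem P_j(μ), i.e., w_j is feasible for P_j(μ) and (1/n)‖w_j‖₂² ≤ (1/n)‖w‖₂² for every w feasible for P_j(μ); (ii) ρ/(1+ρ) ≤ μ ≤ 1. -/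
open Finset

/-- Feasibility for the problem `P_j(μ)`: the vector `w ∈ ℝⁿ` satisfies
`‖(1/n) Aᵀ w − e_j‖_∞ ≤ μ`. -/
def FeasibleW {n p : ℕ} (A : Matrix (Fin n) (Fin p) ℝ) (j : Fin p) (μ : ℝ)
    (w : Fin n → ℝ) : Prop :=
  ∀ k : Fin p, |(1 / (n : ℝ)) * (∑ i, A i k * w i) - (if k = j then 1 else 0)| ≤ μ

/-- For an `n × p` matrix `A` with nonzero columns, `p ≥ 2`, and
`ρ = max_{i ≠ j} |a_{·i}ᵀ a_{·j}| / ‖a_{·j}‖₂²`, the closed-form vectors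
`w_j = (n(1−μ)/‖a_{·j}‖₂²) a_{·j}` are optimal for every problem `P_j(μ)` if and only if
`ρ/(1+ρ) ≤ μ ≤ 1`. -/
theorem closed_form_optimal_iff {n p : ℕ} (hn : 0 < n) (hp : 2 ≤ p)
    (A : Matrix (Fin n) (Fin p) ℝ)
    (hA : ∀ j : Fin p, (fun i => A i j) ≠ 0)
    (ρ μ : ℝ)
    (hρ : IsGreatest
      {x : ℝ | ∃ i j : Fin p, i ≠ j ∧
        x = |∑ k, A k i * A k j| / (∑ k, (A k j) ^ 2)} ρ) :
    (∀ j : Fin p,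
      FeasibleW A j μ (fun i => ((n : ℝ) * (1 - μ) / (∑ k, (A k j) ^ 2)) * A i j) ∧
      ∀ w : Fin n → ℝ, FeasibleW A j μ w →
        (1 / (n : ℝ)) * ∑ i, (((n : ℝ) * (1 - μ) / (∑ k, (A k j) ^ 2)) * A i j) ^ 2
          ≤ (1 / (n : ℝ)) * ∑ i, (w i) ^ 2)
    ↔ (ρ / (1 + ρ) ≤ μ ∧ μ ≤ 1) := by
  have hn' : (0:ℝ) < n := by exact_mod_cast hn
  have hS : ∀ j : Fin p, (0:ℝ) < ∑ k, (A k j)^2 := by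
    intro j
    have h := hA j
    have hex : ∃ i, A i j ≠ 0 := by
      by_contra hc
      push_neg at hc
      exact h (funext fun i => hc i)
    obtain ⟨i, hi⟩ := hex
    exact Finset.sum_pos' (fun k _ => sq_nonneg _)
      ⟨i, Finset.mem_univ i, pow_pos (abs_pos.mpr hi) 2 |>.trans_eq (by
        rw [sq_abs])⟩
  have hρ0 : (0:ℝ) ≤ ρ := by
    obtain ⟨i, j, hij, hx⟩ := hρ.1
    rw [hx]
    exact div_nonneg (abs_nonneg _) (le_of_lt (hS j))
  have hdot : ∀ (j k : Fin p) (c : ℝ),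
      ∑ i, A i k * (c * A i j) = c * ∑ i, A i k * A i j := by
    intro j k c
    rw [Finset.mul_sum]
    exact Finset.sum_congr rfl fun i _ => by ring
  have hself : ∀ j : Fin p, ∑ i, A i j * A i j = ∑ k, (A k j)^2 :=
    fun j => Finset.sum_congr rfl fun i _ => (sq (A i j)).symm
  constructor
  · -- forward
    intro h
    have hμ1 : μ ≤ 1 := by
      by_contra hc
      push_neg at hc
      have hpj : 0 < p := by omega
      set j : Fin p := ⟨0, hpj⟩
      have h0 : FeasibleW A j μ 0 := by
        intro k
        simp only [Pi.zero_apply, mul_zero, Finset.sum_const_zero, zero_sub, abs_neg]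
        split_ifs
        · simpa using le_of_lt hc
        · simpa using le_of_lt (lt_trans one_pos hc)
      have hopt := (h j).2 0 h0
      simp only [Pi.zero_apply] at hopt
      have hz : (1 / (n : ℝ)) * ∑ i : Fin n, ((0:ℝ))^2 = 0 := by simp
      rw [hz] at hopt
      set c : ℝ := (n : ℝ) * (1 - μ) / (∑ k, (A k j) ^ 2) with hcdef
      have hcne : c ≠ 0 := by
        apply div_ne_zero
        · have : (1:ℝ) - μ ≠ 0 := by linarith
          positivity
        · exact ne_of_gt (hS j)
      have hsum : ∑ i, (c * A i j)^2 = c^2 * ∑ k, (A k j)^2 := by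
        rw [Finset.mul_sum]
        exact Finset.sum_congr rfl fun i _ => by ring
      have hpos : 0 < (1 / (n : ℝ)) * ∑ i, (c * A i j)^2 := by
        rw [hsum]
        have := hS j
        have := pow_pos (abs_pos.mpr hcne) 2
        positivity
      linarith
    refine ⟨?_, hμ1⟩
    obtain ⟨i, j, hij, hxρ⟩ := hρ.1
    have hfeas := (h j).1 i
    rw [if_neg hij] at hfeas
    simp only at hfeas
    rw [hdot j i, sub_zero] at hfeas
    set D : ℝ := ∑ k, A k i * A k j with hD
    set S : ℝ := ∑ k, (A k j)^2 with hSd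
    have hSj : 0 < S := hS j
    have hval : (1 / (n : ℝ)) * ((n : ℝ) * (1 - μ) / S * D) = (1 - μ) / S * D := by
      field_simp
    rw [hval, abs_mul] at hfeas
    have h1μ : (0:ℝ) ≤ 1 - μ := by linarith
    rw [abs_of_nonneg (div_nonneg h1μ (le_of_lt hSj))] at hfeas
    -- hfeas : (1-μ)/S * |D| ≤ μ, and ρ = |D|/S
    have hρval : ρ = |D| / S := hxρ
    have hkey : (1 - μ) * ρ ≤ μ := by
      rw [hρval]
      calc (1 - μ) * (|D| / S) = (1 - μ) / S * |D| := by ring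
        _ ≤ μ := hfeas
    rw [div_le_iff₀ (by linarith : (0:ℝ) < 1 + ρ)]
    nlinarith
  · -- reverse
    rintro ⟨hμlo, hμ1⟩ j
    set S : ℝ := ∑ k, (A k j)^2 with hSd
    have hSj : 0 < S := hS j
    set c : ℝ := (n : ℝ) * (1 - μ) / S with hcdef
    have hμ0 : 0 ≤ μ := le_trans (div_nonneg hρ0 (by linarith)) hμlo
    have hkey : (1 - μ) * ρ ≤ μ := by
      have := (div_le_iff₀ (by linarith : (0:ℝ) < 1 + ρ)).mp hμlo
      nlinarith
    have h1μ : (0:ℝ) ≤ 1 - μ := by linarith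
    constructor
    · intro k
      simp only
      rw [hdot j k]
      by_cases hk : k = j
      · subst hk
        rw [if_pos rfl, hself k]
        have : (1 / (n : ℝ)) * (c * S) = 1 - μ := by
          rw [hcdef]; field_simp
        rw [this]
        rw [show (1 - μ) - 1 = -μ by ring, abs_neg, abs_of_nonneg hμ0]
      · rw [if_neg hk, sub_zero]
        have hval : (1 / (n : ℝ)) * (c * ∑ i, A i k * A i j)
            = (1 - μ) / S * ∑ i, A i k * A i j := by
          rw [hcdef]; field_simp
        rw [hval, abs_mul, abs_of_nonneg (div_nonneg h1μ (le_of_lt hSj))]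
        have hmem : |∑ i, A i k * A i j| / S ∈
            {x : ℝ | ∃ i j : Fin p, i ≠ j ∧
              x = |∑ l, A l i * A l j| / (∑ l, (A l j) ^ 2)} := ⟨k, j, hk, rfl⟩
        have hle : |∑ i, A i k * A i j| / S ≤ ρ := hρ.2 hmem
        calc (1 - μ) / S * |∑ i, A i k * A i j|
            = (1 - μ) * (|∑ i, A i k * A i j| / S) := by ring
          _ ≤ (1 - μ) * ρ := by
              exact mul_le_mul_of_nonneg_left hle h1μ
          _ ≤ μ := hkey
    · intro w hw
      have hTfeas := hw j
      rw [if_pos rfl] at hTfeas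
      set T : ℝ := ∑ i, A i j * w i with hT
      have hT1 : (n : ℝ) * (1 - μ) ≤ T := by
        have h2 := (abs_le.mp hTfeas).1
        have : 1 - μ ≤ (1 / (n:ℝ)) * T := by linarith
        have h3 := mul_le_mul_of_nonneg_left this (le_of_lt hn')
        calc (n:ℝ) * (1 - μ) ≤ (n:ℝ) * ((1 / (n:ℝ)) * T) := h3
          _ = T := by field_simp
      have hCS : T^2 ≤ S * ∑ i, (w i)^2 := by
        have := Finset.sum_mul_sq_le_sq_mul_sq Finset.univ
          (fun i => A i j) (fun i => w i)
        simpa [hT, hSd] using this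
      have hsum : ∑ i, (c * A i j)^2 = c^2 * S := by
        rw [Finset.mul_sum]
        exact Finset.sum_congr rfl fun i _ => by ring
      rw [hsum]
      have hcS : c * S = (n : ℝ) * (1 - μ) := by
        rw [hcdef]; field_simp
      have hTnn : 0 ≤ (n:ℝ) * (1 - μ) := by positivity
      have hT2 : ((n:ℝ) * (1 - μ))^2 ≤ T^2 := by nlinarith
      have hW : c^2 * S ≤ ∑ i, (w i)^2 := by
        have hSW : ((n:ℝ)*(1-μ))^2 ≤ S * ∑ i, (w i)^2 := le_trans hT2 hCS
        nlinarith [sq_nonneg c]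
      have := mul_le_mul_of_nonneg_left hW (le_of_lt (one_div_pos.mpr hn'))
      exact this
end

section
/- Let n, p be positive integers with p ≥ 2, let A be a real n×p matrix none of whose columns is zero, let ρ := max_{i≠j} |a_{·i}ᵀ a_{·j}| / ‖a_{·j}‖₂², and suppose ρ/(1+ρ) ≤ μ ≤ 1. Then for every j ∈ {1,…,p}, the vector w_j := (n(1−μ)/‖a_{·j}‖₂²) · a_{·j} is feasible for P_j(μ), i.e., ‖(1/n)Aᵀw_j − e_j‖_∞ ≤ μ. -/
open Finset

/-- If `ρ/(1+ρ) ≤ μ ≤ 1`, then for every `j` the closed-form vector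
`w_j = (n(1−μ)/‖a_{·j}‖₂²) a_{·j}` is feasible for `P_j(μ)`. -/
theorem closed_form_feasible {n p : ℕ} (hn : 0 < n) (hp : 2 ≤ p)
    (A : Matrix (Fin n) (Fin p) ℝ)
    (hA : ∀ j : Fin p, (fun i => A i j) ≠ 0)
    (ρ μ : ℝ)
    (hρ : IsGreatest
      {x : ℝ | ∃ i j : Fin p, i ≠ j ∧
        x = |∑ k, A k i * A k j| / (∑ k, (A k j) ^ 2)} ρ)
    (hμ₁ : ρ / (1 + ρ) ≤ μ) (hμ₂ : μ ≤ 1) :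
    ∀ j : Fin p,
      FeasibleW A j μ (fun i => ((n : ℝ) * (1 - μ) / (∑ k, (A k j) ^ 2)) * A i j) := by
  have hρ0 : 0 ≤ ρ := by
    obtain ⟨i, j, hij, hx⟩ := hρ.1
    rw [hx]
    exact div_nonneg (abs_nonneg _) (Finset.sum_nonneg fun k _ => sq_nonneg _)
  have hμ0 : 0 ≤ μ :=
    le_trans (div_nonneg hρ0 (by linarith)) hμ₁
  have hkey : ρ ≤ μ * (1 + ρ) := by
    have h1 : (0:ℝ) < 1 + ρ := by linarith
    exact (div_le_iff₀ h1).mp hμ₁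
  intro j k
  have hS : 0 < ∑ m, (A m j)^2 := by
    rcases Function.ne_iff.mp (hA j) with ⟨i, hi⟩
    exact Finset.sum_pos' (fun m _ => sq_nonneg _)
      ⟨i, Finset.mem_univ _, by have h : A i j ≠ 0 := hi; positivity⟩
  have hn' : (0:ℝ) < n := by exact_mod_cast hn
  have hsum : ∀ m : Fin p,
      (∑ i, A i m * (((n : ℝ) * (1 - μ) / (∑ l, (A l j) ^ 2)) * A i j))
      = ((n : ℝ) * (1 - μ) / (∑ l, (A l j) ^ 2)) * ∑ i, A i m * A i j := by
    intro m
    rw [Finset.mul_sum]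
    exact Finset.sum_congr rfl fun i _ => by ring
  by_cases hk : k = j
  · subst hk
    rw [if_pos rfl, hsum]
    have hSj : (∑ i, A i k * A i k) = ∑ l, (A l k) ^ 2 :=
      Finset.sum_congr rfl fun i _ => (sq (A i k)).symm
    rw [hSj]
    have : (1 / (n:ℝ)) * ((n : ℝ) * (1 - μ) / (∑ l, (A l k) ^ 2) * ∑ l, (A l k) ^ 2)
        = 1 - μ := by
      field_simp
    rw [this]
    rw [abs_le]; constructor <;> linarith
  · rw [if_neg hk, hsum, sub_zero]
    have hmem : |∑ i, A i k * A i j| / (∑ l, (A l j) ^ 2) ≤ ρ :=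
      hρ.2 ⟨k, j, hk, rfl⟩
    have h1μ : (0:ℝ) ≤ 1 - μ := by linarith
    have heq : (1 / (n:ℝ)) * ((n : ℝ) * (1 - μ) / (∑ l, (A l j) ^ 2) * ∑ i, A i k * A i j)
        = ((1 - μ) / (∑ l, (A l j) ^ 2)) * ∑ i, A i k * A i j := by
      field_simp
    have habs : |(1 / (n:ℝ)) * ((n : ℝ) * (1 - μ) / (∑ l, (A l j) ^ 2) * ∑ i, A i k * A i j)|
        = (1 - μ) * (|∑ i, A i k * A i j| / (∑ l, (A l j) ^ 2)) := by
      rw [heq, abs_mul, abs_of_nonneg (div_nonneg h1μ hS.le)]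
      ring
    rw [habs]
    calc (1 - μ) * (|∑ i, A i k * A i j| / (∑ l, (A l j) ^ 2))
        ≤ (1 - μ) * ρ := by
          exact mul_le_mul_of_nonneg_left hmem h1μ
      _ ≤ μ := by nlinarith
end

section
/- Let n, p be positive integers, let A be a real n×p matrix, let j ∈ {1,…,p}, and let μ ∈ ℝ. For every w ∈ ℝⁿ with ‖(1/n)Aᵀw − e_j‖_∞ ≤ μ and every u ∈ ℝᵖ, one has (1/n)‖w‖₂² ≥ −(1/(4n))‖Au‖₂² + u_j − μ‖u‖₁, where u_j is the j-th entry of u and ‖u‖₁ = Σᵢ|uᵢ|. -/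
open Finset

/-- weak duality. For any `w` feasible for `P_j(μ)` and any `u ∈ ℝᵖ`,
`(1/n)‖w‖₂² ≥ −(1/(4n))‖Au‖₂² + u_j − μ‖u‖₁`. -/
theorem weak_duality {n p : ℕ} (hn : 0 < n) (hp : 0 < p)
    (A : Matrix (Fin n) (Fin p) ℝ) (j : Fin p) (μ : ℝ)
    (w : Fin n → ℝ)
    (hw : ∀ k : Fin p, |(1 / (n : ℝ)) * (∑ i, A i k * w i) - (if k = j then 1 else 0)| ≤ μ)
    (u : Fin p → ℝ) :
    (1 / (n : ℝ)) * ∑ i, (w i) ^ 2 ≥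
      -(1 / (4 * (n : ℝ))) * (∑ i, (∑ k, A i k * u k) ^ 2) + u j - μ * ∑ k, |u k| := by
  have hn' : (0:ℝ) < n := by exact_mod_cast hn
  set S := ∑ i, (∑ k, A i k * u k) * w i with hS
  have swap : S = ∑ k, u k * (∑ i, A i k * w i) := by
    rw [hS]
    simp only [Finset.sum_mul, Finset.mul_sum]
    rw [Finset.sum_comm]
    apply Finset.sum_congr rfl; intro k _
    apply Finset.sum_congr rfl; intro i _
    ring
  have h1 : u j - μ * ∑ k, |u k| ≤ (1/(n:ℝ)) * S := by
    have key : u j - (1/(n:ℝ)) * S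
        = ∑ k, u k * ((if k = j then (1:ℝ) else 0) - (1/(n:ℝ)) * (∑ i, A i k * w i)) := by
      rw [swap, Finset.mul_sum]
      simp only [mul_sub]
      rw [Finset.sum_sub_distrib]
      congr 1
      · simp [mul_ite]
      · apply Finset.sum_congr rfl; intro k _; ring
    have hb : ∑ k, u k * ((if k = j then (1:ℝ) else 0) - (1/(n:ℝ)) * (∑ i, A i k * w i))
        ≤ ∑ k, |u k| * μ := by
      apply Finset.sum_le_sum
      intro k _
      calc u k * ((if k = j then (1:ℝ) else 0) - (1/(n:ℝ)) * (∑ i, A i k * w i))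
          ≤ |u k * ((if k = j then (1:ℝ) else 0) - (1/(n:ℝ)) * (∑ i, A i k * w i))| :=
            le_abs_self _
        _ = |u k| * |(if k = j then (1:ℝ) else 0) - (1/(n:ℝ)) * (∑ i, A i k * w i)| :=
            abs_mul _ _
        _ ≤ |u k| * μ := by
            apply mul_le_mul_of_nonneg_left _ (abs_nonneg _)
            rw [abs_sub_comm]
            exact hw k
    have : u j - (1/(n:ℝ)) * S ≤ μ * ∑ k, |u k| := by
      rw [key]
      calc _ ≤ ∑ k, |u k| * μ := hb
        _ = μ * ∑ k, |u k| := by rw [Finset.mul_sum]; exact Finset.sum_congr rfl (fun k _ => mul_comm _ _)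
    linarith
  have h2 : S ≤ (∑ i, (w i)^2) + (1/4) * ∑ i, (∑ k, A i k * u k)^2 := by
    have := Finset.sum_le_sum (f := fun i => (∑ k, A i k * u k) * w i)
      (g := fun i => (w i)^2 + (1/4) * (∑ k, A i k * u k)^2)
      (s := Finset.univ)
      (fun i _ => by nlinarith [sq_nonneg (w i - (∑ k, A i k * u k)/2)])
    rw [Finset.sum_add_distrib, ← Finset.mul_sum] at this
    exact this
  have h3 : (1/(n:ℝ)) * S ≤ (1/(n:ℝ)) * ((∑ i, (w i)^2) + (1/4) * ∑ i, (∑ k, A i k * u k)^2) :=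
    mul_le_mul_of_nonneg_left h2 (by positivity)
  have h4 : -(1 / (4 * (n : ℝ))) * (∑ i, (∑ k, A i k * u k) ^ 2)
      = -((1/(n:ℝ)) * ((1/4) * ∑ i, (∑ k, A i k * u k)^2)) := by
    field_simp
  rw [ge_iff_le]
  nlinarith [h1, h3]
end

section
/- Let n, p be positive integers, let A be a real n×p matrix, set Σ̂ := AᵀA/n, let j ∈ {1,…,p}, and let μ ∈ ℝ. If w ∈ ℝⁿ satisfies ‖(1/n)Aᵀw − e_j‖_∞ ≤ μ, then there exists m ∈ ℝᵖ with ‖Σ̂m − e_j‖_∞ ≤ μ and mᵀΣ̂m ≤ (1/n)‖w‖₂². -/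
open Finset Matrix RealInnerProductSpace

/-- If `w` is feasible for the reformulated problem `P_j(μ)`, then there is
an `m` feasible for the original problem `M_j(μ)` (with `Σ̂ = AᵀA/n`) whose objective value
`mᵀ Σ̂ m` is at most `(1/n)‖w‖₂²`. -/
theorem feasible_W_to_M {n p : ℕ} (hn : 0 < n) (hp : 0 < p)
    (A : Matrix (Fin n) (Fin p) ℝ) (j : Fin p) (μ : ℝ)
    (Shat : Matrix (Fin p) (Fin p) ℝ) (hShat : Shat = ((n : ℝ)⁻¹) • (Aᵀ * A))
    (w : Fin n → ℝ)
    (hw : ∀ k : Fin p, |(1 / (n : ℝ)) * (∑ i, A i k * w i) - (if k = j then 1 else 0)| ≤ μ) :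
    ∃ m : Fin p → ℝ,
      (∀ k : Fin p, |Shat.mulVec m k - (if k = j then 1 else 0)| ≤ μ) ∧
      m ⬝ᵥ Shat.mulVec m ≤ (1 / (n : ℝ)) * ∑ i, (w i) ^ 2 := by
  classical
  let f : (Fin p → ℝ) →ₗ[ℝ] EuclideanSpace ℝ (Fin n) :=
    { toFun := fun m => WithLp.toLp 2 (A.mulVec m)
      map_add' := fun x y => by simp [Matrix.mulVec_add]
      map_smul' := fun c x => by simp [Matrix.mulVec_smul] }
  let K : Submodule ℝ (EuclideanSpace ℝ (Fin n)) := LinearMap.range f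
  let w' : EuclideanSpace ℝ (Fin n) := WithLp.toLp 2 w
  let v : EuclideanSpace ℝ (Fin n) := K.orthogonalProjectionOnto w'
  obtain ⟨m, hm⟩ : ∃ m, f m = v := (K.orthogonalProjectionOnto w').2
  -- orthogonality: Aᵀ (w - v) = 0
  have horth : ∀ k : Fin p, ∑ i, A i k * v i = ∑ i, A i k * w i := by
    intro k
    have hmem : w' - v ∈ Kᗮ := K.sub_starProjection_mem_orthogonal w'
    have h1 : f (Pi.single k 1) ∈ K := LinearMap.mem_range_self f _
    have h0 : (inner ℝ (f (Pi.single k 1)) (w' - v) : ℝ) = 0 :=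
      (Submodule.mem_orthogonal K _).1 hmem _ h1
    have hfe : ∀ i, f (Pi.single k 1) i = A i k := by
      intro i
      simp [f, Matrix.mulVec_single]
    rw [PiLp.inner_apply] at h0
    simp only [RCLike.inner_apply, conj_trivial] at h0
    have : ∑ i, A i k * (w' i - v i) = 0 := by
      rw [← h0]; exact Finset.sum_congr rfl fun i _ => by rw [hfe i, mul_comm]; rfl
    have hsum : ∑ i, A i k * w' i - ∑ i, A i k * v i = 0 := by
      rw [← Finset.sum_sub_distrib]
      simpa [mul_sub] using this
    have : ∑ i, A i k * w' i = ∑ i, A i k * w i := rfl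
    linarith
  have hAm : ∀ i, A.mulVec m i = v i := fun i => congrFun (congrArg WithLp.ofLp hm) i
  -- Shat m = (1/n) Aᵀ w
  have hSm : ∀ k, Shat.mulVec m k = (1 / (n : ℝ)) * ∑ i, A i k * w i := by
    intro k
    rw [hShat]
    simp only [Matrix.smul_mulVec, Pi.smul_apply, smul_eq_mul,
      ← Matrix.mulVec_mulVec]
    rw [one_div]
    congr 1
    have : Aᵀ.mulVec (A.mulVec m) k = ∑ i, A i k * (A.mulVec m) i := by
      simp [Matrix.mulVec, dotProduct, Matrix.transpose_apply, mul_comm]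
    rw [this, ← horth k]
    exact Finset.sum_congr rfl fun i _ => by rw [hAm i]
  refine ⟨m, fun k => by rw [hSm k]; exact hw k, ?_⟩
  -- objective
  have hobj : m ⬝ᵥ Shat.mulVec m = (1 / (n : ℝ)) * ∑ i, (v i) ^ 2 := by
    rw [hShat]
    simp only [Matrix.smul_mulVec, dotProduct_smul, smul_eq_mul, one_div]
    congr 1
    rw [← Matrix.mulVec_mulVec, dotProduct_mulVec, Matrix.vecMul_transpose]
    simp only [dotProduct]
    exact Finset.sum_congr rfl fun i _ => by rw [hAm i]; ring
  rw [hobj]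
  have hnormle : ‖v‖ ≤ ‖w'‖ := by
    calc ‖v‖ ≤ ‖K.orthogonalProjectionOnto‖ * ‖w'‖ := (K.orthogonalProjectionOnto).le_opNorm w'
    _ ≤ 1 * ‖w'‖ := by
        exact mul_le_mul_of_nonneg_right (K.orthogonalProjectionOnto_norm_le) (norm_nonneg _)
    _ = ‖w'‖ := one_mul _
  have hsq : ∑ i, (v i) ^ 2 ≤ ∑ i, (w i) ^ 2 := by
    have h1 : ∑ i, (v i) ^ 2 = ‖v‖ ^ 2 := by
      rw [EuclideanSpace.norm_eq, Real.sq_sqrt (by positivity)]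
      exact Finset.sum_congr rfl fun i _ => by simp [Real.norm_eq_abs, sq_abs]
    have h2 : ∑ i, (w i) ^ 2 = ‖w'‖ ^ 2 := by
      rw [EuclideanSpace.norm_eq, Real.sq_sqrt (by positivity)]
      exact Finset.sum_congr rfl fun i _ => by simp [w', Real.norm_eq_abs, sq_abs]
    rw [h1, h2]
    exact pow_le_pow_left₀ (norm_nonneg _) hnormle 2
  have hn' : (0:ℝ) < (n:ℝ) := by exact_mod_cast hn
  exact mul_le_mul_of_nonneg_left hsq (by positivity)
end

section
/- Let n, p be positive integers, let A be a real n×p matrix, set Σ̂ := AᵀA/n, let j ∈ {1,…,p}, and let μ ∈ ℝ. Then the infimum of mᵀΣ̂m over all m ∈ ℝᵖ with ‖Σ̂m − e_j‖_∞ ≤ μ equals the infimum of (1/n)‖w‖₂² over all w ∈ ℝⁿ with ‖(1/n)Aᵀw − e_j‖_∞ ≤ μ (as infima in ℝ ∪ {+∞}, with the convention that the infimum over the empty set is +∞; in fact one feasible set is empty if and only if the other is). -/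
open Finset Matrix

private lemma exists_normal {n p : ℕ} (A : Matrix (Fin n) (Fin p) ℝ) (w : Fin n → ℝ) :
    ∃ m : Fin p → ℝ, ∀ k, ∑ i, A i k * (w i - A.mulVec m i) = 0 := by
  classical
  let e := (WithLp.linearEquiv 2 ℝ (Fin n → ℝ)).symm
  let K : Submodule ℝ (EuclideanSpace ℝ (Fin n)) :=
    (LinearMap.range A.mulVecLin).map e.toLinearMap
  set W : EuclideanSpace ℝ (Fin n) := e w with hW
  have hmem : (K.orthogonalProjectionOnto W : EuclideanSpace ℝ (Fin n)) ∈ K :=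
    (K.orthogonalProjectionOnto W).2
  obtain ⟨-, ⟨m, rfl⟩, hm⟩ := hmem
  refine ⟨m, fun k => ?_⟩
  have hperp : W - K.orthogonalProjectionOnto W ∈ Kᗮ := by
    have := Submodule.sub_starProjection_mem_orthogonal (K := K) W
    rwa [Submodule.starProjection_apply] at this
  have hcol : e (A.mulVec (Pi.single k 1)) ∈ K :=
    ⟨A.mulVec (Pi.single k 1), ⟨Pi.single k 1, rfl⟩, rfl⟩
  have h0 := hperp (e (A.mulVec (Pi.single k 1))) hcol
  have hcolval : ∀ i, A.mulVec (Pi.single k 1) i = A i k := by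
    intro i; simp [Matrix.mulVec, dotProduct, Pi.single_apply]
  rw [← hm] at h0
  simpa [PiLp.inner_apply, RCLike.inner_apply, conj_trivial, hcolval, hW, e,
    Matrix.mulVecLin, mul_comm] using h0

private lemma shat_mulVec {n p : ℕ} (A : Matrix (Fin n) (Fin p) ℝ)
    (Shat : Matrix (Fin p) (Fin p) ℝ) (hShat : Shat = ((n : ℝ)⁻¹) • (Aᵀ * A))
    (m : Fin p → ℝ) (k : Fin p) :
    Shat.mulVec m k = (1 / (n : ℝ)) * ∑ i, A i k * A.mulVec m i := by
  subst hShat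
  rw [one_div, Matrix.smul_mulVec, Pi.smul_apply, smul_eq_mul,
    ← Matrix.mulVec_mulVec]
  congr 1

private lemma quad_eq {n p : ℕ} (A : Matrix (Fin n) (Fin p) ℝ)
    (Shat : Matrix (Fin p) (Fin p) ℝ) (hShat : Shat = ((n : ℝ)⁻¹) • (Aᵀ * A))
    (m : Fin p → ℝ) :
    m ⬝ᵥ Shat.mulVec m = (1 / (n : ℝ)) * ∑ i, (A.mulVec m i) ^ 2 := by
  have h : ∀ k, Shat.mulVec m k = (1 / (n : ℝ)) * ∑ i, A i k * A.mulVec m i :=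
    shat_mulVec A Shat hShat m
  simp only [dotProduct, h]
  have h1 : ∀ k ∈ Finset.univ, m k * ((1 / (n:ℝ)) * ∑ i, A i k * A.mulVec m i)
      = (1 / (n:ℝ)) * (m k * ∑ i, A i k * A.mulVec m i) := fun k _ => by ring
  rw [Finset.sum_congr rfl h1, ← Finset.mul_sum]
  congr 1
  calc ∑ k, m k * ∑ i, A i k * A.mulVec m i
      = ∑ k, ∑ i, m k * (A i k * A.mulVec m i) := by simp [Finset.mul_sum]
    _ = ∑ i, ∑ k, m k * (A i k * A.mulVec m i) := Finset.sum_comm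
    _ = ∑ i, (A.mulVec m i) ^ 2 := by
        refine Finset.sum_congr rfl fun i _ => ?_
        have h2 : ∑ k, m k * (A i k * A.mulVec m i)
            = (∑ k, A i k * m k) * A.mulVec m i := by
          rw [Finset.sum_mul]; exact Finset.sum_congr rfl fun k _ => by ring
        rw [h2, sq]
        congr 1

private lemma norm_le {n p : ℕ} (A : Matrix (Fin n) (Fin p) ℝ) (w : Fin n → ℝ)
    (m : Fin p → ℝ) (hm : ∀ k, ∑ i, A i k * (w i - A.mulVec m i) = 0) :
    ∑ i, (A.mulVec m i) ^ 2 ≤ ∑ i, (w i) ^ 2 := by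
  have hcross : ∑ i, A.mulVec m i * (w i - A.mulVec m i) = 0 := by
    have h3 : ∑ i, A.mulVec m i * (w i - A.mulVec m i)
        = ∑ i, ∑ k, m k * (A i k * (w i - A.mulVec m i)) := by
      refine Finset.sum_congr rfl fun i _ => ?_
      rw [Matrix.mulVec, dotProduct, Finset.sum_mul]
      exact Finset.sum_congr rfl fun k _ => by ring
    rw [h3, Finset.sum_comm]
    simp only [← Finset.mul_sum]
    simp [hm]
  have expand : ∑ i, (w i) ^ 2 = ∑ i, (A.mulVec m i) ^ 2
      + 2 * ∑ i, A.mulVec m i * (w i - A.mulVec m i)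
      + ∑ i, (w i - A.mulVec m i) ^ 2 := by
    rw [Finset.mul_sum, ← Finset.sum_add_distrib, ← Finset.sum_add_distrib]
    refine Finset.sum_congr rfl fun i _ => ?_
    ring
  rw [expand, hcross]
  have : 0 ≤ ∑ i, (w i - A.mulVec m i) ^ 2 :=
    Finset.sum_nonneg fun i _ => sq_nonneg _
  linarith

/-- The optimal values (as infima in `ℝ ∪ {+∞}`, with `sInf ∅ = +∞`) of the
original problem `M_j(μ)` and of the reformulated problem `P_j(μ)` coincide; moreover one
feasible set is empty if and only if the other is. -/
theorem inf_M_eq_inf_W {n p : ℕ} (hn : 0 < n) (hp : 0 < p)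
    (A : Matrix (Fin n) (Fin p) ℝ) (j : Fin p) (μ : ℝ)
    (Shat : Matrix (Fin p) (Fin p) ℝ) (hShat : Shat = ((n : ℝ)⁻¹) • (Aᵀ * A)) :
    sInf {x : EReal | ∃ m : Fin p → ℝ,
        (∀ k : Fin p, |Shat.mulVec m k - (if k = j then 1 else 0)| ≤ μ) ∧
        x = ((m ⬝ᵥ Shat.mulVec m : ℝ) : EReal)}
      = sInf {x : EReal | ∃ w : Fin n → ℝ,
        (∀ k : Fin p, |(1 / (n : ℝ)) * (∑ i, A i k * w i) - (if k = j then 1 else 0)| ≤ μ) ∧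
        x = (((1 / (n : ℝ)) * ∑ i, (w i) ^ 2 : ℝ) : EReal)} ∧
    ((∃ m : Fin p → ℝ,
        ∀ k : Fin p, |Shat.mulVec m k - (if k = j then 1 else 0)| ≤ μ) ↔
      (∃ w : Fin n → ℝ,
        ∀ k : Fin p, |(1 / (n : ℝ)) * (∑ i, A i k * w i) - (if k = j then 1 else 0)| ≤ μ)) := by
  have hninv : (0:ℝ) ≤ 1 / (n:ℝ) := by positivity
  -- from feasible w to feasible m with objective ≤
  have WtoM : ∀ w : Fin n → ℝ,
      (∀ k : Fin p, |(1 / (n : ℝ)) * (∑ i, A i k * w i) - (if k = j then 1 else 0)| ≤ μ) →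
      ∃ m : Fin p → ℝ,
        (∀ k : Fin p, |Shat.mulVec m k - (if k = j then 1 else 0)| ≤ μ) ∧
        (m ⬝ᵥ Shat.mulVec m) ≤ (1 / (n : ℝ)) * ∑ i, (w i) ^ 2 := by
    intro w hw
    obtain ⟨m, hm⟩ := exists_normal A w
    have heq : ∀ k, ∑ i, A i k * A.mulVec m i = ∑ i, A i k * w i := by
      intro k
      have := hm k
      simp only [mul_sub] at this
      rw [Finset.sum_sub_distrib] at this
      linarith
    refine ⟨m, fun k => ?_, ?_⟩
    · rw [shat_mulVec A Shat hShat, heq]; exact hw k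
    · rw [quad_eq A Shat hShat]
      exact mul_le_mul_of_nonneg_left (norm_le A w m hm) hninv
  -- from feasible m to feasible w with equal objective
  have MtoW : ∀ m : Fin p → ℝ,
      (∀ k : Fin p, |Shat.mulVec m k - (if k = j then 1 else 0)| ≤ μ) →
      (∀ k : Fin p, |(1 / (n : ℝ)) * (∑ i, A i k * A.mulVec m i) - (if k = j then 1 else 0)| ≤ μ)
        ∧ (m ⬝ᵥ Shat.mulVec m) = (1 / (n : ℝ)) * ∑ i, (A.mulVec m i) ^ 2 := by
    intro m hmfeas
    exact ⟨fun k => by rw [← shat_mulVec A Shat hShat]; exact hmfeas k,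
      quad_eq A Shat hShat m⟩
  constructor
  · apply le_antisymm
    · refine sInf_le_sInf_of_isCoinitialFor ?_
      rintro x ⟨w, hw, rfl⟩
      obtain ⟨m, hm1, hm2⟩ := WtoM w hw
      exact ⟨_, ⟨m, hm1, rfl⟩, by exact_mod_cast hm2⟩
    · refine sInf_le_sInf_of_isCoinitialFor ?_
      rintro x ⟨m, hm, rfl⟩
      obtain ⟨h1, h2⟩ := MtoW m hm
      exact ⟨_, ⟨A.mulVec m, h1, rfl⟩, by rw [h2]⟩
  · constructor
    · rintro ⟨m, hm⟩; exact ⟨A.mulVec m, (MtoW m hm).1⟩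
    · rintro ⟨w, hw⟩
      obtain ⟨m, hm1, -⟩ := WtoM w hw
      exact ⟨m, hm1⟩
end
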